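/- Let c ∈ ℝ, let a be a P-periodic locally integrable weight satisfying (a*), and let g : [0,1] → ℝ be continuous satisfying (g*) and (g₁). Let λ > 0 and d ∈ (0,1). Then there exists R̄ = R̄(d) ∈ (d,1) such that for every R ∈ [R̄,1), every θ ∈ (0,1], every μ > 0, and every i ∈ {1,…,m}, if u is a non-negative solution of u'' + cu' + θ(λa⁺(x) − μa⁻(x))g(u) = 0 with values in [0,1] defined on I⁻_{i−1} ∪ I⁺_i ∪ I⁻_i (intervals taken cyclically modulo P) with max_{x∈I⁻_{i−1}∪I⁺_i∪I⁻_i} u(x) = max_{x∈I⁺_i} u(x) = R, then u(σ_{i+1}) ≥ R + θ(μ‖A^r_i‖_{L¹(I⁻_i)} χ(d,R) e^{−|c||I⁻_i|} − λ‖a‖_{L¹(I⁺_i)} Γ(R) e^{|c||I⁺_i ∪ I⁻_i|}|I⁺_i ∪ I⁻_i|) and u(τ_{i−1}) ≥ R + θ(μ‖A^l_{i−1}‖_{L¹(I⁻_{i−1})} χ(d,R) e^{−|c||I⁻_{i−1}|} − λ‖a‖_{L¹(I⁺_i)} Γ(R) e^{|c||I⁻_{i−1} ∪ I⁺_i|}|I⁻_{i−1}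 ∪ I⁺_i|). -/

import Mathlib

open MeasureTheory Set Filter Topology

noncomputable section

/-- Carathéodory solution of `u'' + c u' + h(x, u(x)) = 0` on `J`:
`u` is C¹ on `J` with derivative `u'`, which is (locally) absolutely continuous with
a.e.-derivative `u''`, and the equation holds a.e. on `J`. -/
def CaraSol (c : ℝ) (h : ℝ → ℝ → ℝ) (u u' : ℝ → ℝ) (J : Set ℝ) : Prop :=
  (∀ x ∈ J, HasDerivWithinAt u (u' x) J x) ∧
  ContinuousOn u' J ∧
  ∃ u'' : ℝ → ℝ,
    (∀ x ∈ J, ∀ y ∈ J, u' y - u' x = ∫ t in x..y, u'' t) ∧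
    (∀ᵐ x ∂(volume.restrict J), u'' x + c * u' x + h x (u x) = 0)

/-- positive part `a⁺` of a weight -/
def pospart (a : ℝ → ℝ) : ℝ → ℝ := fun x => max (a x) 0

/-- negative part `a⁻` of a weight -/
def negpart (a : ℝ → ℝ) : ℝ → ℝ := fun x => max (-a x) 0

/-- the two-parameter weight `a_{λ,μ} = λ a⁺ - μ a⁻` -/
def awt (a : ℝ → ℝ) (lam mu : ℝ) : ℝ → ℝ := fun x => lam * pospart a x - mu * negpart a x

/-- the critical ratio `μ#(λ) = λ ∫₀^P a⁺ / ∫₀^P a⁻` -/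
def muSharp (a : ℝ → ℝ) (P lam : ℝ) : ℝ :=
  lam * (∫ x in (0:ℝ)..P, pospart a x) / (∫ x in (0:ℝ)..P, negpart a x)

/-- A `P`-periodic locally integrable weight satisfying `(a*)`, with `m` positivity
intervals `I⁺ᵢ = [σ i, τ i]` separated by negativity intervals `I⁻ᵢ = [τ i, σ (i+1)]`. -/
structure AStar (P : ℝ) (m : ℕ) (a : ℝ → ℝ) (σ τ : ℕ → ℝ) : Prop where
  hP : 0 < P
  hm : 1 ≤ m
  periodic : ∀ x, a (x + P) = a x
  locint : LocallyIntegrable a volume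
  σ_one : σ 1 = 0
  σ_last : σ (m + 1) = P
  lt_στ : ∀ i ∈ Finset.Icc 1 m, σ i < τ i
  lt_τσ : ∀ i ∈ Finset.Icc 1 m, τ i < σ (i + 1)
  pos_ae : ∀ i ∈ Finset.Icc 1 m, ∀ᵐ x ∂(volume.restrict (Icc (σ i) (τ i))), 0 ≤ a x
  pos_ne : ∀ i ∈ Finset.Icc 1 m, ¬ (∀ᵐ x ∂(volume.restrict (Icc (σ i) (τ i))), a x = 0)
  neg_ae : ∀ i ∈ Finset.Icc 1 m, ∀ᵐ x ∂(volume.restrict (Icc (τ i) (σ (i + 1)))), a x ≤ 0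
  neg_ne : ∀ i ∈ Finset.Icc 1 m, ¬ (∀ᵐ x ∂(volume.restrict (Icc (τ i) (σ (i + 1)))), a x = 0)

/-- condition `(g*)` -/
def Gstar (g : ℝ → ℝ) : Prop := g 0 = 0 ∧ g 1 = 0 ∧ ∀ u ∈ Ioo (0:ℝ) 1, 0 < g u

/-- condition `(g₀)`: `g(u)/u → 0` as `u → 0⁺` -/
def Gzero (g : ℝ → ℝ) : Prop := Tendsto (fun u => g u / u) (𝓝[>] (0:ℝ)) (𝓝 0)

/-- condition `(g₁)`: `limsup_{u→1⁻} g(u)/(1-u) < ∞` -/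
def Gone (g : ℝ → ℝ) : Prop := ∃ K : ℝ, ∀ᶠ u in 𝓝[<] (1:ℝ), g u / (1 - u) ≤ K

/-- `P`-periodic Carathéodory solution of `u'' + c u' + w(x) g(u) = 0` on `ℝ`. -/
def PerSol (c : ℝ) (w g u u' : ℝ → ℝ) (P : ℝ) : Prop :=
  CaraSol c (fun x v => w x * g v) u u' univ ∧ ∀ x, u (x + P) = u x

/-!
At a maximum point `x₀ ∈ I⁺ᵢ` we have `u'(x₀) = 0`, so by variation of constants
`-u'(x) = ∫_{x₀}^x e^{c(ξ-x)} w(ξ) dξ` with `w = θ (λa⁺ - μa⁻) g(u)`. By `(g₁)`, `g(v) ≤ L(1-v)`,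
hence `w ≤ λ L a⁺ (1-u)`, and Grönwall bounds the deficit `1 - u` on the whole window by
`(1 - R) C`, where `C` depends only on `c, λ, L, P` and `‖a‖_{L¹(0,P)}`. So for `R` close to `1`
the solution stays above `d`, and `χ(d,R) ≤ g(u) ≤ Γ(R)` there. Integrating `u'` once more, the
negative part of the weight raises `u(σ_{i+1})` by at least the first term, while the positive part
lowers it by at most the second. The estimate at `τ_{i-1}` is the one at the right end for
`x ↦ u(-x)`.
-/

open Real

theorem abs_mul_le_abs_mul_of_abs_le {c t ℓ : ℝ} (ht : |t| ≤ ℓ) : |c * t| ≤ |c| * ℓ := by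
  rw [abs_mul]; exact mul_le_mul_of_nonneg_left ht (abs_nonneg c)

theorem exp_mul_le_exp_abs_mul {c t ℓ : ℝ} (ht : |t| ≤ ℓ) : exp (c * t) ≤ exp (|c| * ℓ) :=
  exp_le_exp.mpr ((le_abs_self _).trans (abs_mul_le_abs_mul_of_abs_le ht))

theorem exp_neg_abs_mul_le_exp_mul {c t ℓ : ℝ} (ht : |t| ≤ ℓ) :
    exp (-(|c| * ℓ)) ≤ exp (c * t) :=
  exp_le_exp.mpr (neg_le.mp ((neg_le_abs _).trans (abs_mul_le_abs_mul_of_abs_le ht)))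

theorem exp_mul_sub_le {c x0 B x ξ ℓ : ℝ} (hx : x ∈ Icc x0 B) (hξ : ξ ∈ Icc x0 B)
    (hℓ : B - x0 ≤ ℓ) : exp (c * (ξ - x)) ≤ exp (|c| * ℓ) :=
  exp_mul_le_exp_abs_mul (abs_sub_le_iff.mpr ⟨by linarith [hξ.2, hx.1], by linarith [hx.2, hξ.1]⟩)

theorem intervalIntegrable_exp_mul {c x0 B x y : ℝ} {f : ℝ → ℝ} (hf : IntegrableOn f (Icc x0 B))
    (hx : x ∈ Icc x0 B) (hy : y ∈ Icc x0 B) (z : ℝ) :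
    IntervalIntegrable (fun ξ => exp (c * (ξ - z)) * f ξ) volume x y :=
  ((hf.mono_set (uIcc_subset_Icc hx hy)).intervalIntegrable).continuousOn_mul (by fun_prop)

theorem integral_exp_mul_le {c x0 B ℓ x m : ℝ} {p : ℝ → ℝ} (hp : IntegrableOn p (Icc x0 B))
    (hp0 : ∀ ξ ∈ Icc x0 B, 0 ≤ p ξ) (hℓ : B - x0 ≤ ℓ) (hx : x ∈ Icc x0 B) (hm : m ∈ Icc x0 B) :
    ∫ ξ in x0..m, exp (c * (ξ - x)) * p ξ ≤ exp (|c| * ℓ) * ∫ ξ in x0..B, p ξ := by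
  have hx0 : x0 ∈ Icc x0 B := left_mem_Icc.mpr (hm.1.trans hm.2)
  calc ∫ ξ in x0..m, exp (c * (ξ - x)) * p ξ ≤ ∫ ξ in x0..m, exp (|c| * ℓ) * p ξ :=
        intervalIntegral.integral_mono_on hm.1 (intervalIntegrable_exp_mul hp hx0 hm x)
          (((hp.mono_set (uIcc_subset_Icc hx0 hm)).intervalIntegrable).const_mul _)
          fun ξ hξ => mul_le_mul_of_nonneg_right
            (exp_mul_sub_le hx ⟨hξ.1, hξ.2.trans hm.2⟩ hℓ) (hp0 ξ ⟨hξ.1, hξ.2.trans hm.2⟩)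
    _ ≤ exp (|c| * ℓ) * ∫ ξ in x0..B, p ξ := by
        rw [intervalIntegral.integral_const_mul]
        exact mul_le_mul_of_nonneg_left (intervalIntegral.integral_mono_interval le_rfl hm.1
          hm.2 (ae_restrict_of_forall_mem measurableSet_Ioc fun ξ hξ => hp0 ξ ⟨hξ.1.le, hξ.2⟩)
          ((intervalIntegrable_iff_integrableOn_Icc_of_le (hm.1.trans hm.2)).mpr hp))
          (exp_pos _).le

theorem le_sSup_image_Icc {f : ℝ → ℝ} {a b v : ℝ} (hf : ContinuousOn f (Icc a b))
    (hv : v ∈ Icc a b) : f v ≤ sSup (f '' Icc a b) :=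
  le_csSup (isCompact_Icc.image_of_continuousOn hf).bddAbove (mem_image_of_mem f hv)

theorem sInf_image_Icc_le {f : ℝ → ℝ} {a b v : ℝ} (hf : ContinuousOn f (Icc a b))
    (hv : v ∈ Icc a b) : sInf (f '' Icc a b) ≤ f v :=
  csInf_le (isCompact_Icc.image_of_continuousOn hf).bddBelow (mem_image_of_mem f hv)

theorem ae_restrict_Icc_comp_neg {p : ℝ → Prop} {a b : ℝ}
    (h : ∀ᵐ x ∂volume.restrict (Icc a b), p x) :
    ∀ᵐ x ∂volume.restrict (Icc (-b) (-a)), p (-x) := by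
  rw [← neg_Icc]
  exact ((Measure.measurePreserving_neg volume).restrict_preimage
    measurableSet_Icc).quasiMeasurePreserving.ae h

theorem integrableOn_Icc_comp_neg {f : ℝ → ℝ} {a b : ℝ} (hf : IntegrableOn f (Icc a b)) :
    IntegrableOn (fun x => f (-x)) (Icc (-b) (-a)) := by
  rw [← neg_Icc]
  exact ((Measure.measurePreserving_neg volume).integrableOn_comp_preimage
    measurableEmbedding_neg).mpr hf

theorem setIntegral_Icc_comp_neg (f : ℝ → ℝ) (a b : ℝ) :
    ∫ x in Icc (-b) (-a), f (-x) = ∫ x in Icc a b, f x := by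
  rw [← neg_Icc]
  exact (Measure.measurePreserving_neg volume).setIntegral_preimage_emb measurableEmbedding_neg
    f _

theorem exp_mul_sub_exp_mul_eq_integral {c x y : ℝ} {v h : ℝ → ℝ}
    (hh : IntervalIntegrable h volume x y)
    (hv : ∀ t ∈ uIcc x y, v t = v x + ∫ s in x..t, h s) :
    exp (c * y) * v y - exp (c * x) * v x = ∫ t in x..y, exp (c * t) * (c * v t + h t) := by
  set V : ℝ → ℝ := fun t => v x + ∫ s in x..t, h s
  have hVac : AbsolutelyContinuousOnInterval V x y :=
    (contDiffOn_const.absolutelyContinuousOnInterval).add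
      (hh.absolutelyContinuousOnInterval_intervalIntegral left_mem_uIcc)
  have hEac : AbsolutelyContinuousOnInterval (fun t => exp (c * t)) x y :=
    (by fun_prop : ContDiff ℝ 1 fun t => exp (c * t)).contDiffOn.absolutelyContinuousOnInterval
  have hE : ∀ t, HasDerivAt (fun t => exp (c * t)) (exp (c * t) * c) t := fun t =>
    ((hasDerivAt_id t).const_mul c).exp.congr_deriv (by simp)
  have hVy : V y = v y := (hv y right_mem_uIcc).symm
  have hVx : V x = v x := by simp [V]
  rw [← hVy, ← hVx, ← hEac.integral_deriv_mul_eq_sub hVac]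
  apply intervalIntegral.integral_congr_ae
  filter_upwards [hh.ae_hasDerivAt_integral] with t ht htxy
  have htI := uIoc_subset_uIcc htxy
  have hVt : HasDerivAt V (h t) t := (ht htI x left_mem_uIcc).const_add (v x)
  rw [(hE t).deriv, hVt.deriv, show V t = v t from (hv t htI).symm]
  ring

/-- `u` solves `u'' + c u' + w = 0` on `J` with `u' x0 = 0`, in variation-of-constants form. -/
structure DampedSol (c : ℝ) (w u u' : ℝ → ℝ) (x0 : ℝ) (J : Set ℝ) : Prop where
  hasDerivWithinAt : ∀ x ∈ J, HasDerivWithinAt u (u' x) J x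
  continuousOn_deriv : ContinuousOn u' J
  integrableOn : IntegrableOn w J
  neg_deriv_eq : ∀ x ∈ J, -u' x = ∫ ξ in x0..x, exp (c * (ξ - x)) * w ξ

theorem CaraSol.dampedSol {c A B x0 : ℝ} {h : ℝ → ℝ → ℝ} {u u' : ℝ → ℝ}
    (hsol : CaraSol c h u u' (Icc A B)) (hint : IntegrableOn (fun x => h x (u x)) (Icc A B))
    (hx0 : x0 ∈ Icc A B) (hcrit : u' x0 = 0) :
    DampedSol c (fun x => h x (u x)) u u' x0 (Icc A B) := by
  obtain ⟨hderiv, hu'c, u'', hrep, hae⟩ := hsol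
  refine ⟨hderiv, hu'c, hint, fun x hx => ?_⟩
  set H : ℝ → ℝ := fun ξ => -(c * u' ξ + h ξ (u ξ))
  have hH : IntegrableOn H (Icc A B) :=
    ((hu'c.integrableOn_compact isCompact_Icc).const_mul c |>.add hint).neg
  rw [ae_restrict_iff' measurableSet_Icc] at hae
  have hsub : uIcc x0 x ⊆ Icc A B := uIcc_subset_Icc hx0 hx
  -- `u''` need not be integrable, but it agrees a.e. with the integrable `H`.
  have hu'rep : ∀ t ∈ uIcc x0 x, u' t = u' x0 + ∫ s in x0..t, H s := by
    intro t ht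
    rw [← sub_eq_iff_eq_add', hrep x0 hx0 t (hsub ht)]
    apply intervalIntegral.integral_congr_ae
    filter_upwards [hae] with s hs hst
    have := hs (uIcc_subset_Icc hx0 (hsub ht) (uIoc_subset_uIcc hst))
    simp only [H]
    linarith
  have key := exp_mul_sub_exp_mul_eq_integral (c := c)
    (hH.mono_set hsub).intervalIntegrable hu'rep
  rw [hcrit, mul_zero, sub_zero] at key
  have hker : ∀ ξ, exp (c * (ξ - x)) * h ξ (u ξ)
      = -exp (-(c * x)) * (exp (c * ξ) * (c * u' ξ + H ξ)) := by
    intro ξ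
    rw [show c * (ξ - x) = -(c * x) + c * ξ by ring, exp_add]
    simp only [H]
    ring
  simp_rw [hker]
  rw [intervalIntegral.integral_const_mul, ← key, ← mul_assoc, neg_mul, ← exp_add]
  simp

namespace DampedSol

variable {c x0 T B : ℝ} {u u' w : ℝ → ℝ}

theorem mono {J J' : Set ℝ} (h : DampedSol c w u u' x0 J) (hJ : J' ⊆ J) :
    DampedSol c w u u' x0 J' :=
  ⟨fun x hx => (h.hasDerivWithinAt x (hJ hx)).mono hJ, h.continuousOn_deriv.mono hJ,
    h.integrableOn.mono_set hJ, fun x hx => h.neg_deriv_eq x (hJ hx)⟩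

theorem comp_neg {a b : ℝ} (h : DampedSol c w u u' x0 (Icc a b)) :
    DampedSol (-c) (fun x => w (-x)) (fun x => u (-x)) (fun x => -u' (-x)) (-x0)
      (Icc (-b) (-a)) := by
  have hmaps : MapsTo Neg.neg (Icc (-b) (-a)) (Icc a b) := fun x hx =>
    ⟨le_neg.mpr hx.2, neg_le.mpr hx.1⟩
  refine ⟨fun x hx => ?_, (h.continuousOn_deriv.comp continuousOn_neg hmaps).neg,
    integrableOn_Icc_comp_neg h.integrableOn, fun x hx => ?_⟩
  · exact ((h.hasDerivWithinAt (-x) (hmaps hx)).comp x (hasDerivWithinAt_neg x _)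
      hmaps).congr_deriv (by simp)
  · simp_rw [show ∀ ξ, -c * (ξ - x) = c * (-ξ - -x) from fun ξ => by ring]
    rw [neg_neg, intervalIntegral.integral_comp_neg (fun η => exp (c * (η - -x)) * w η),
      neg_neg, intervalIntegral.integral_symm, ← h.neg_deriv_eq (-x) (hmaps hx), neg_neg]

theorem antitoneOn (h : DampedSol c w u u' x0 (Icc x0 B)) (hTB : T ≤ B)
    (hw : ∀ᵐ ξ ∂volume.restrict (Icc x0 T), 0 ≤ w ξ) : AntitoneOn u (Icc x0 T) := by
  have hsub : Icc x0 T ⊆ Icc x0 B := Icc_subset_Icc_right hTB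
  refine antitoneOn_of_hasDerivWithinAt_nonpos (f' := u') (convex_Icc _ _)
    (fun x hx => (h.hasDerivWithinAt x (hsub hx)).continuousWithinAt.mono hsub)
    (fun x hx => ?_) (fun x hx => ?_) <;> simp only [interior_Icc] at hx ⊢
  · exact (h.hasDerivWithinAt x (hsub (Ioo_subset_Icc_self hx))).mono
      (Ioo_subset_Icc_self.trans hsub)
  · rw [← neg_nonneg, h.neg_deriv_eq x (hsub (Ioo_subset_Icc_self hx))]
    apply intervalIntegral.integral_nonneg_of_ae_restrict hx.1.le
    filter_upwards [ae_restrict_of_ae_restrict_of_subset (Icc_subset_Icc_right hx.2.le) hw]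
      with ξ hξ
    exact mul_nonneg (exp_pos _).le hξ

/-- Since `u` decreases on `[x0, T]`, the deficit `1 - u` can be taken out of the integral at its
right end point; on `[T, B]` the weight is nonpositive and only helps. -/
theorem neg_deriv_le_mul_one_sub_min {k : ℝ → ℝ} {K ℓ : ℝ}
    (h : DampedSol c w u u' x0 (Icc x0 B)) (hx0T : x0 ≤ T) (hTB : T ≤ B) (hℓ : B - x0 ≤ ℓ)
    (hw_nonneg : ∀ᵐ ξ ∂volume.restrict (Icc x0 T), 0 ≤ w ξ)
    (hw_nonpos : ∀ᵐ ξ ∂volume.restrict (Icc T B), w ξ ≤ 0)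
    (hk : IntegrableOn k (Icc x0 B)) (hk0 : ∀ ξ ∈ Icc x0 B, 0 ≤ k ξ)
    (hwk : ∀ ξ ∈ Icc x0 B, w ξ ≤ k ξ * (1 - u ξ)) (hu1 : ∀ x ∈ Icc x0 B, u x ≤ 1)
    (hK : exp (|c| * ℓ) * ∫ ξ in x0..B, k ξ ≤ K) :
    ∀ x ∈ Icc x0 B, -u' x ≤ K * (1 - u (min x T)) := by
  have hanti := h.antitoneOn hTB hw_nonneg
  have hhead : ∀ x ∈ Icc x0 B, ∀ m ∈ Icc x0 T,
      ∫ ξ in x0..m, exp (c * (ξ - x)) * w ξ ≤ K * (1 - u m) := by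
    intro x hx m hm
    have hmB : m ∈ Icc x0 B := ⟨hm.1, hm.2.trans hTB⟩
    have hx0 : x0 ∈ Icc x0 B := left_mem_Icc.mpr (hm.1.trans hmB.2)
    have hym : 0 ≤ 1 - u m := sub_nonneg.mpr (hu1 m hmB)
    calc ∫ ξ in x0..m, exp (c * (ξ - x)) * w ξ
        ≤ ∫ ξ in x0..m, exp (c * (ξ - x)) * (k ξ * (1 - u m)) :=
          intervalIntegral.integral_mono_on hm.1
            (intervalIntegrable_exp_mul h.integrableOn hx0 hmB x)
            (intervalIntegrable_exp_mul (hk.mul_const _) hx0 hmB x) fun ξ hξ =>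
              mul_le_mul_of_nonneg_left ((hwk ξ ⟨hξ.1, hξ.2.trans hmB.2⟩).trans
                (mul_le_mul_of_nonneg_left (by linarith [hanti ⟨hξ.1, hξ.2.trans hm.2⟩ hm hξ.2])
                  (hk0 ξ ⟨hξ.1, hξ.2.trans hmB.2⟩))) (exp_pos _).le
      _ ≤ exp (|c| * ℓ) * ∫ ξ in x0..B, k ξ * (1 - u m) :=
          integral_exp_mul_le (hk.mul_const _) (fun ξ hξ => mul_nonneg (hk0 ξ hξ) hym) hℓ hx hmB
      _ ≤ K * (1 - u m) := by
          rw [intervalIntegral.integral_mul_const, ← mul_assoc]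
          exact mul_le_mul_of_nonneg_right hK hym
  intro x hx
  rw [h.neg_deriv_eq x hx]
  rcases le_total x T with hxT | hTx
  · rw [min_eq_left hxT]
    exact hhead x hx x ⟨hx.1, hxT⟩
  have hT : T ∈ Icc x0 B := ⟨hx0T, hTB⟩
  rw [min_eq_right hTx, ← intervalIntegral.integral_add_adjacent_intervals
    (intervalIntegrable_exp_mul h.integrableOn (left_mem_Icc.mpr (hx0T.trans hTB)) hT x)
    (intervalIntegrable_exp_mul h.integrableOn hT hx x)]
  have htail : 0 ≤ ∫ ξ in T..x, -(exp (c * (ξ - x)) * w ξ) := by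
    apply intervalIntegral.integral_nonneg_of_ae_restrict hTx
    filter_upwards [ae_restrict_of_ae_restrict_of_subset (Icc_subset_Icc_right hx.2)
      hw_nonpos] with ξ hξ
    exact neg_nonneg.mpr (mul_nonpos_of_nonneg_of_nonpos (exp_pos _).le hξ)
  rw [intervalIntegral.integral_neg] at htail
  linarith [hhead x hx T (right_mem_Icc.mpr hx0T)]

/-- Grönwall: on `[x0, T]` the deficit `1 - u` grows at most exponentially, on `[T, B]` at most
linearly. -/
theorem one_sub_le_mul_exp {k : ℝ → ℝ} {K ℓ : ℝ} (h : DampedSol c w u u' x0 (Icc x0 B))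
    (hx0T : x0 ≤ T) (hTB : T ≤ B) (hℓ : B - x0 ≤ ℓ)
    (hw_nonneg : ∀ᵐ ξ ∂volume.restrict (Icc x0 T), 0 ≤ w ξ)
    (hw_nonpos : ∀ᵐ ξ ∂volume.restrict (Icc T B), w ξ ≤ 0)
    (hk : IntegrableOn k (Icc x0 B)) (hk0 : ∀ ξ ∈ Icc x0 B, 0 ≤ k ξ)
    (hwk : ∀ ξ ∈ Icc x0 B, w ξ ≤ k ξ * (1 - u ξ)) (hu1 : ∀ x ∈ Icc x0 B, u x ≤ 1)
    (hK : exp (|c| * ℓ) * ∫ ξ in x0..B, k ξ ≤ K) :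
    ∀ x ∈ Icc x0 B, 1 - u x ≤ (1 - u x0) * exp (K * ℓ) := by
  have hx0B : x0 ≤ B := hx0T.trans hTB
  have hy0 : 0 ≤ 1 - u x0 := sub_nonneg.mpr (hu1 x0 (left_mem_Icc.mpr hx0B))
  have hK0 : 0 ≤ K := le_trans (mul_nonneg (exp_pos _).le
    (intervalIntegral.integral_nonneg hx0B fun ξ hξ => hk0 ξ hξ)) hK
  have hcont : ContinuousOn (fun x => 1 - u x) (Icc x0 B) :=
    fun x hx => (h.hasDerivWithinAt x hx).continuousWithinAt.const_sub 1
  have hderiv : ∀ x ∈ Ico x0 B, HasDerivWithinAt (fun x => 1 - u x) (-u' x) (Ici x) x :=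
    fun x hx => ((h.hasDerivWithinAt x (Ico_subset_Icc_self hx)).mono_of_mem_nhdsWithin
      (mem_of_superset (Icc_mem_nhdsGE hx.2) (Icc_subset_Icc_left hx.1))).const_sub 1
  have hbound := h.neg_deriv_le_mul_one_sub_min hx0T hTB hℓ hw_nonneg hw_nonpos hk hk0 hwk hu1 hK
  have hgrowth : ∀ x ∈ Icc x0 T, 1 - u x ≤ (1 - u x0) * exp (K * (x - x0)) := by
    simpa only [gronwallBound_ε0] using le_gronwallBound_of_liminf_deriv_right_le (K := K)
      (ε := 0) (hcont.mono (Icc_subset_Icc_right hTB))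
      (fun x hx r hr => (hderiv x ⟨hx.1, hx.2.trans_le hTB⟩).liminf_right_slope_le hr) le_rfl
      (fun x hx => by
        simpa [min_eq_left hx.2.le] using hbound x ⟨hx.1, hx.2.le.trans hTB⟩)
  have htail : ∀ x ∈ Icc T B, 1 - u x ≤ 1 - u T + K * (1 - u T) * (x - T) := by
    simpa only [gronwallBound_K0] using le_gronwallBound_of_liminf_deriv_right_le (K := 0)
      (hcont.mono (Icc_subset_Icc_left hx0T))
      (fun x hx r hr => (hderiv x ⟨hx0T.trans hx.1, hx.2⟩).liminf_right_slope_le hr) le_rfl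
      (fun x hx => by
        simpa [min_eq_right hx.1] using hbound x ⟨hx0T.trans hx.1, hx.2.le⟩)
  intro x hx
  rcases le_total x T with hxT | hTx
  · calc 1 - u x ≤ (1 - u x0) * exp (K * (x - x0)) := hgrowth x ⟨hx.1, hxT⟩
      _ ≤ (1 - u x0) * exp (K * ℓ) := by gcongr; linarith [hx.2]
  · calc 1 - u x ≤ (1 - u T) * (1 + K * (x - T)) := by linarith [htail x ⟨hTx, hx.2⟩]
      _ ≤ (1 - u x0) * exp (K * (T - x0)) * exp (K * (x - T)) :=
        mul_le_mul (hgrowth T (right_mem_Icc.mpr hx0T)) (by linarith [add_one_le_exp (K * (x - T))])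
          (add_nonneg zero_le_one (mul_nonneg hK0 (sub_nonneg.mpr hTx)))
          (mul_nonneg hy0 (exp_pos _).le)
      _ ≤ (1 - u x0) * exp (K * ℓ) := by
        rw [mul_assoc, ← exp_add, ← mul_add]
        gcongr
        linarith [hx.2]

theorem neg_deriv_le_of_le_sub {p q : ℝ → ℝ} (h : DampedSol c w u u' x0 (Icc x0 B))
    (hx0T : x0 ≤ T) (hTB : T ≤ B) (hp : IntegrableOn p (Icc x0 B))
    (hq : IntegrableOn q (Icc T B)) (hp0 : ∀ ξ ∈ Icc x0 B, 0 ≤ p ξ)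
    (hq0 : ∀ ξ ∈ Icc T B, 0 ≤ q ξ) (hwp : ∀ ξ ∈ Icc x0 B, w ξ ≤ p ξ)
    (hwq : ∀ ξ ∈ Icc T B, w ξ ≤ p ξ - q ξ) :
    ∀ x ∈ Icc x0 B, -u' x ≤ exp (|c| * (B - x0)) * (∫ ξ in x0..B, p ξ)
      - exp (-(|c| * (B - T))) * ∫ ξ in T..max x T, q ξ := by
  intro x hx
  have hx0 : x0 ∈ Icc x0 B := left_mem_Icc.mpr (hx.1.trans hx.2)
  set r : ℝ → ℝ := fun ξ => p ξ - w ξ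
  have hr : IntegrableOn r (Icc x0 B) := hp.sub h.integrableOn
  have hsplit : -u' x = (∫ ξ in x0..x, exp (c * (ξ - x)) * p ξ)
      - ∫ ξ in x0..x, exp (c * (ξ - x)) * r ξ := by
    rw [← intervalIntegral.integral_sub (intervalIntegrable_exp_mul hp hx0 hx x)
      (intervalIntegrable_exp_mul hr hx0 hx x), h.neg_deriv_eq x hx]
    congr 1; ext ξ; simp only [r]; ring
  have hp_le := integral_exp_mul_le (c := c) hp hp0 le_rfl hx hx
  have hr_nonneg : ∀ y ∈ Icc x0 x, 0 ≤ ∫ ξ in x0..y, exp (c * (ξ - x)) * r ξ := fun y hy =>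
    intervalIntegral.integral_nonneg hy.1 fun ξ hξ => mul_nonneg (exp_pos _).le
      (sub_nonneg.mpr (hwp ξ ⟨hξ.1, hξ.2.trans (hy.2.trans hx.2)⟩) : 0 ≤ r ξ)
  rcases le_total x T with hxT | hTx
  · rw [max_eq_right hxT, intervalIntegral.integral_same, mul_zero, sub_zero, hsplit]
    linarith [hr_nonneg x (right_mem_Icc.mpr hx.1)]
  have hT : T ∈ Icc x0 B := ⟨hx0T, hTB⟩
  have hr_ge : exp (-(|c| * (B - T))) * ∫ ξ in T..x, q ξ
      ≤ ∫ ξ in T..x, exp (c * (ξ - x)) * r ξ := by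
    have hqx : IntegrableOn q (uIcc T x) :=
      hq.mono_set (uIcc_subset_Icc (left_mem_Icc.mpr hTB) ⟨hTx, hx.2⟩)
    rw [← intervalIntegral.integral_const_mul]
    refine intervalIntegral.integral_mono_on hTx (hqx.intervalIntegrable.const_mul _)
      (intervalIntegrable_exp_mul hr hT hx x) fun ξ hξ => ?_
    have hξ' : ξ ∈ Icc T B := ⟨hξ.1, hξ.2.trans hx.2⟩
    calc exp (-(|c| * (B - T))) * q ξ ≤ exp (c * (ξ - x)) * q ξ :=
          mul_le_mul_of_nonneg_right (exp_neg_abs_mul_le_exp_mul (abs_sub_le_iff.mpr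
            ⟨by linarith [hξ.2, hTx], by linarith [hx.2, hξ.1]⟩)) (hq0 ξ hξ')
      _ ≤ exp (c * (ξ - x)) * r ξ :=
          mul_le_mul_of_nonneg_left (by simp only [r]; linarith [hwq ξ hξ']) (exp_pos _).le
  rw [max_eq_left hTx, hsplit, ← intervalIntegral.integral_add_adjacent_intervals
    (intervalIntegrable_exp_mul hr hx0 hT x) (intervalIntegrable_exp_mul hr hT hx x)]
  linarith [hr_nonneg T ⟨hx0T, hTx⟩]

theorem integral_deriv_eq_sub (h : DampedSol c w u u' x0 (Icc x0 B)) {a b : ℝ}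
    (ha : a ∈ Icc x0 B) (hb : b ∈ Icc x0 B) (hab : a ≤ b) : ∫ x in a..b, u' x = u b - u a :=
  intervalIntegral.integral_eq_sub_of_hasDerivAt_of_le hab
    (fun x hx => (h.hasDerivWithinAt x ⟨ha.1.trans hx.1, hx.2.trans hb.2⟩).continuousWithinAt.mono
      (Icc_subset_Icc ha.1 hb.2))
    (fun x hx => (h.hasDerivWithinAt x ⟨ha.1.trans hx.1.le, hx.2.le.trans hb.2⟩).hasDerivAt
      (Icc_mem_nhds (ha.1.trans_lt hx.1) (hx.2.trans_le hb.2)))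
    ((h.continuousOn_deriv.mono (Icc_subset_Icc ha.1 hb.2)).intervalIntegrable_of_Icc hab)

theorem add_le_of_le_sub {p q : ℝ → ℝ} (h : DampedSol c w u u' x0 (Icc x0 B))
    (hx0T : x0 ≤ T) (hTB : T ≤ B) (hp : IntegrableOn p (Icc x0 B))
    (hq : IntegrableOn q (Icc T B)) (hp0 : ∀ ξ ∈ Icc x0 B, 0 ≤ p ξ)
    (hq0 : ∀ ξ ∈ Icc T B, 0 ≤ q ξ) (hwp : ∀ ξ ∈ Icc x0 B, w ξ ≤ p ξ)
    (hwq : ∀ ξ ∈ Icc T B, w ξ ≤ p ξ - q ξ) :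
    u x0 + (exp (-(|c| * (B - T))) * (∫ x in T..B, ∫ ξ in T..x, q ξ)
      - (B - x0) * exp (|c| * (B - x0)) * ∫ ξ in x0..B, p ξ) ≤ u B := by
  have hx0B : x0 ≤ B := hx0T.trans hTB
  have hT : T ∈ Icc x0 B := ⟨hx0T, hTB⟩
  set EP := exp (|c| * (B - x0)) * ∫ ξ in x0..B, p ξ
  set e := exp (-(|c| * (B - T)))
  have hbound := h.neg_deriv_le_of_le_sub hx0T hTB hp hq hp0 hq0 hwp hwq
  have hhead : -((T - x0) * EP) ≤ u T - u x0 := by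
    rw [← h.integral_deriv_eq_sub (left_mem_Icc.mpr hx0B) hT hx0T, ← mul_neg, ← smul_eq_mul,
      ← intervalIntegral.integral_const]
    refine intervalIntegral.integral_mono_on hx0T intervalIntegrable_const
      ((h.continuousOn_deriv.mono (Icc_subset_Icc_right hTB)).intervalIntegrable_of_Icc hx0T)
      fun x hx => ?_
    have := hbound x ⟨hx.1, hx.2.trans hTB⟩
    rw [max_eq_right hx.2, intervalIntegral.integral_same] at this
    linarith
  have htail : e * (∫ x in T..B, ∫ ξ in T..x, q ξ) - (B - T) * EP ≤ u B - u T := by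
    have hQ : IntervalIntegrable (fun x => ∫ ξ in T..x, q ξ) volume T B :=
      (intervalIntegral.continuousOn_primitive_interval'
        ((intervalIntegrable_iff_integrableOn_Icc_of_le hTB).mpr hq)
        left_mem_uIcc).intervalIntegrable
    rw [← h.integral_deriv_eq_sub hT (right_mem_Icc.mpr hx0B) hTB, ← smul_eq_mul (B - T),
      ← intervalIntegral.integral_const, ← intervalIntegral.integral_const_mul,
      ← intervalIntegral.integral_sub (hQ.const_mul e) intervalIntegrable_const]
    refine intervalIntegral.integral_mono_on hTB ((hQ.const_mul e).sub intervalIntegrable_const)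
      ((h.continuousOn_deriv.mono (Icc_subset_Icc_left hx0T)).intervalIntegrable_of_Icc hTB)
      fun x hx => ?_
    have := hbound x ⟨hx0T.trans hx.1, hx.2⟩
    rw [max_eq_left hx.1] at this
    linarith
  linarith

end DampedSol

theorem pospart_nonneg (a : ℝ → ℝ) (x : ℝ) : 0 ≤ pospart a x := le_max_right _ _

theorem negpart_nonneg (a : ℝ → ℝ) (x : ℝ) : 0 ≤ negpart a x := le_max_right _ _

theorem pospart_eq_zero {a : ℝ → ℝ} {x : ℝ} (hx : a x ≤ 0) : pospart a x = 0 := max_eq_right hx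

theorem negpart_eq_zero {a : ℝ → ℝ} {x : ℝ} (hx : 0 ≤ a x) : negpart a x = 0 :=
  max_eq_right (neg_nonpos.mpr hx)

theorem integrableOn_pospart {a : ℝ → ℝ} {s : Set ℝ} (ha : IntegrableOn a s) :
    IntegrableOn (pospart a) s :=
  Integrable.pos_part ha

theorem integrableOn_negpart {a : ℝ → ℝ} {s : Set ℝ} (ha : IntegrableOn a s) :
    IntegrableOn (negpart a) s :=
  Integrable.pos_part ha.neg

theorem mul_awt_mul_le {a : ℝ → ℝ} {θ lam mu χ Γ G x : ℝ} (hθ : 0 ≤ θ) (hlam : 0 ≤ lam)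
    (hmu : 0 ≤ mu) (hχ : χ ≤ G) (hΓ : G ≤ Γ) :
    θ * awt a lam mu x * G ≤ θ * lam * Γ * pospart a x - θ * mu * χ * negpart a x := by
  have h1 := mul_le_mul_of_nonneg_left hΓ (mul_nonneg (mul_nonneg hθ hlam) (pospart_nonneg a x))
  have h2 := mul_le_mul_of_nonneg_left hχ (mul_nonneg (mul_nonneg hθ hmu) (negpart_nonneg a x))
  simp only [awt]
  linarith

theorem mul_awt_mul_le_pospart {a : ℝ → ℝ} {θ lam mu G x : ℝ} (hθ0 : 0 ≤ θ) (hθ1 : θ ≤ 1)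
    (hlam : 0 ≤ lam) (hmu : 0 ≤ mu) (hG : 0 ≤ G) :
    θ * awt a lam mu x * G ≤ lam * pospart a x * G := by
  have h := mul_awt_mul_le (a := a) (x := x) (χ := 0) hθ0 hlam hmu hG le_rfl
  have h' := mul_le_mul_of_nonneg_right hθ1
    (mul_nonneg (mul_nonneg hlam (pospart_nonneg a x)) hG)
  linarith

theorem mul_awt_mul_nonneg {a : ℝ → ℝ} {θ lam mu G x : ℝ} (hθ : 0 ≤ θ) (hlam : 0 ≤ lam)
    (hG : 0 ≤ G) (hx : 0 ≤ a x) : 0 ≤ θ * awt a lam mu x * G := by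
  simpa [awt, negpart_eq_zero hx, mul_assoc] using
    mul_nonneg hθ (mul_nonneg (mul_nonneg hlam (pospart_nonneg a x)) hG)

theorem mul_awt_mul_nonpos {a : ℝ → ℝ} {θ lam mu G x : ℝ} (hθ : 0 ≤ θ) (hmu : 0 ≤ mu)
    (hG : 0 ≤ G) (hx : a x ≤ 0) : θ * awt a lam mu x * G ≤ 0 := by
  simpa [awt, pospart_eq_zero hx, mul_assoc] using
    mul_nonneg hθ (mul_nonneg (mul_nonneg hmu (negpart_nonneg a x)) hG)

theorem integral_pospart_le_integral_abs {a : ℝ → ℝ} {S x0 T B : ℝ} (hSx0 : S ≤ x0)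
    (hx0T : x0 ≤ T) (hTB : T ≤ B) (ha : IntegrableOn a (Icc S B))
    (hneg : ∀ᵐ x ∂volume.restrict (Icc T B), a x ≤ 0) :
    ∫ x in x0..B, pospart a x ≤ ∫ x in Icc S T, |a x| := by
  have hpos := integrableOn_pospart ha
  rw [← intervalIntegral.integral_add_adjacent_intervals (b := T)
    ((intervalIntegrable_iff_integrableOn_Icc_of_le hx0T).mpr
      (hpos.mono_set (Icc_subset_Icc hSx0 hTB)))
    ((intervalIntegrable_iff_integrableOn_Icc_of_le hTB).mpr
      (hpos.mono_set (Icc_subset_Icc_left (hSx0.trans hx0T)))),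
    intervalIntegral.integral_of_le hx0T, intervalIntegral.integral_of_le hTB]
  have htail : ∫ x in Ioc T B, pospart a x = 0 := by
    refine integral_eq_zero_of_ae ?_
    filter_upwards [ae_restrict_of_ae_restrict_of_subset Ioc_subset_Icc_self hneg] with x hx
    exact pospart_eq_zero hx
  calc (∫ x in Ioc x0 T, pospart a x) + ∫ x in Ioc T B, pospart a x
      = ∫ x in Ioc x0 T, pospart a x := by rw [htail, add_zero]
    _ ≤ ∫ x in Icc S T, pospart a x :=
        setIntegral_mono_set (hpos.mono_set (Icc_subset_Icc_right hTB))
          (ae_of_all _ (pospart_nonneg a)) (Ioc_subset_Icc_self.trans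
            (Icc_subset_Icc_left hSx0)).eventuallyLE
    _ ≤ ∫ x in Icc S T, |a x| :=
        setIntegral_mono_on (hpos.mono_set (Icc_subset_Icc_right hTB))
          (ha.mono_set (Icc_subset_Icc_right hTB)).abs measurableSet_Icc
          fun x _ => max_le (le_abs_self _) (abs_nonneg _)

theorem integrableOn_mul_awt_mul {a G : ℝ → ℝ} {A B θ lam mu : ℝ}
    (ha : IntegrableOn a (Icc A B)) (hG : ContinuousOn G (Icc A B)) :
    IntegrableOn (fun x => θ * awt a lam mu x * G x) (Icc A B) :=
  IntegrableOn.mul_continuousOn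
    ((((integrableOn_pospart ha).const_mul lam).sub
      ((integrableOn_negpart ha).const_mul mu)).const_mul θ)
    hG isCompact_Icc

theorem Gstar.nonneg {g : ℝ → ℝ} (hgs : Gstar g) : ∀ v ∈ Icc (0:ℝ) 1, 0 ≤ g v := by
  intro v hv
  rcases hv.1.eq_or_lt with rfl | h0
  · exact hgs.1.ge
  rcases hv.2.eq_or_lt with rfl | h1
  · exact hgs.2.1.ge
  exact (hgs.2.2 v ⟨h0, h1⟩).le

theorem Gone.exists_le_mul_one_sub {g : ℝ → ℝ} (hg1 : Gone g) (hg : ContinuousOn g (Icc 0 1))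
    (h1 : g 1 = 0) : ∃ L, ∀ v ∈ Icc (0:ℝ) 1, g v ≤ L * (1 - v) := by
  obtain ⟨K, hK⟩ := hg1
  obtain ⟨l, hl1, hl⟩ := (nhdsLT_basis (1:ℝ)).eventually_iff.mp hK
  set M := sSup (g '' Icc 0 1)
  have hM : ∀ v ∈ Icc (0:ℝ) 1, g v ≤ M := fun v hv => le_sSup_image_Icc hg hv
  have hM0 : 0 ≤ M := h1 ▸ hM 1 (right_mem_Icc.mpr zero_le_one)
  refine ⟨max K (M / (1 - l)), fun v hv => ?_⟩
  rcases hv.2.eq_or_lt with rfl | hv1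
  · simp [h1]
  have h1v : 0 < 1 - v := sub_pos.mpr hv1
  rcases lt_or_ge l v with hlv | hvl
  · calc g v ≤ K * (1 - v) := (div_le_iff₀ h1v).mp (hl ⟨hlv, hv1⟩)
      _ ≤ max K (M / (1 - l)) * (1 - v) := by gcongr; exact le_max_left _ _
  · calc g v ≤ M / (1 - l) * (1 - l) := by
          rw [div_mul_cancel₀ _ (sub_pos.mpr hl1).ne']; exact hM v hv
      _ ≤ max K (M / (1 - l)) * (1 - v) := by
        gcongr
        exact le_max_right _ _

section OneSided

variable {c lam mu θ d L ℓ N S x0 T B : ℝ} {a g u u' : ℝ → ℝ}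

theorem le_of_one_sub_mul_exp_le
    (h : DampedSol c (fun ξ => θ * awt a lam mu ξ * g (u ξ)) u u' x0 (Icc x0 B))
    (hSx0 : S ≤ x0) (hx0T : x0 ≤ T) (hTB : T ≤ B) (ha : IntegrableOn a (Icc S B))
    (hpos : ∀ᵐ x ∂volume.restrict (Icc S T), 0 ≤ a x)
    (hneg : ∀ᵐ x ∂volume.restrict (Icc T B), a x ≤ 0)
    (hθ : θ ∈ Ioc (0:ℝ) 1) (hlam : 0 ≤ lam) (hmu : 0 ≤ mu)
    (hg0 : ∀ v ∈ Icc (0:ℝ) 1, 0 ≤ g v) (hgL : ∀ v ∈ Icc (0:ℝ) 1, g v ≤ L * (1 - v))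
    (hu01 : ∀ x ∈ Icc x0 B, u x ∈ Icc (0:ℝ) 1) (hℓ : B - S ≤ ℓ)
    (hN : ∫ x in Icc S T, |a x| ≤ N)
    (hclose : (1 - u x0) * exp (exp (|c| * ℓ) * lam * L * N * ℓ) ≤ 1 - d) :
    ∀ x ∈ Icc x0 B, d ≤ u x := by
  have hsub : Icc x0 B ⊆ Icc S B := Icc_subset_Icc_left hSx0
  have hL0 : 0 ≤ L := by
    have := (hg0 0 ⟨le_rfl, zero_le_one⟩).trans (hgL 0 ⟨le_rfl, zero_le_one⟩)
    linarith
  have hgu : ∀ ξ ∈ Icc x0 B, 0 ≤ g (u ξ) := fun ξ hξ => hg0 _ (hu01 ξ hξ)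
  have hw_nonneg : ∀ᵐ ξ ∂volume.restrict (Icc x0 T), 0 ≤ θ * awt a lam mu ξ * g (u ξ) := by
    filter_upwards [ae_restrict_of_ae_restrict_of_subset (Icc_subset_Icc_left hSx0) hpos,
      ae_restrict_mem measurableSet_Icc] with ξ hξ hξT
    exact mul_awt_mul_nonneg hθ.1.le hlam (hgu ξ ⟨hξT.1, hξT.2.trans hTB⟩) hξ
  have hw_nonpos : ∀ᵐ ξ ∂volume.restrict (Icc T B), θ * awt a lam mu ξ * g (u ξ) ≤ 0 := by
    filter_upwards [hneg, ae_restrict_mem measurableSet_Icc] with ξ hξ hξT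
    exact mul_awt_mul_nonpos hθ.1.le hmu (hgu ξ ⟨hx0T.trans hξT.1, hξT.2⟩) hξ
  have hwk : ∀ ξ ∈ Icc x0 B, θ * awt a lam mu ξ * g (u ξ)
      ≤ lam * L * pospart a ξ * (1 - u ξ) := fun ξ hξ =>
    (mul_awt_mul_le_pospart hθ.1.le hθ.2 hlam hmu (hgu ξ hξ)).trans
      ((mul_le_mul_of_nonneg_left (hgL _ (hu01 ξ hξ))
        (mul_nonneg hlam (pospart_nonneg a ξ))).trans_eq (by ring))
  have hK : exp (|c| * ℓ) * ∫ ξ in x0..B, lam * L * pospart a ξ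
      ≤ exp (|c| * ℓ) * lam * L * N := by
    rw [intervalIntegral.integral_const_mul, ← mul_assoc, ← mul_assoc]
    exact mul_le_mul_of_nonneg_left
      ((integral_pospart_le_integral_abs hSx0 hx0T hTB ha hneg).trans hN)
      (mul_nonneg (mul_nonneg (exp_pos _).le hlam) hL0)
  have key := h.one_sub_le_mul_exp hx0T hTB (by linarith) hw_nonneg hw_nonpos
    (((integrableOn_pospart ha).mono_set hsub).const_mul (lam * L))
    (fun ξ _ => mul_nonneg (mul_nonneg hlam hL0) (pospart_nonneg a ξ)) hwk
    (fun x hx => (hu01 x hx).2) hK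
  intro x hx
  linarith [key x hx]

theorem lower_bound_at_right_end_of_bounds {χ Γ : ℝ}
    (h : DampedSol c (fun ξ => θ * awt a lam mu ξ * g (u ξ)) u u' x0 (Icc x0 B))
    (hSx0 : S ≤ x0) (hx0T : x0 ≤ T) (hTB : T ≤ B) (ha : IntegrableOn a (Icc S B))
    (hneg : ∀ᵐ x ∂volume.restrict (Icc T B), a x ≤ 0)
    (hθ : 0 ≤ θ) (hlam : 0 ≤ lam) (hmu : 0 ≤ mu) (hχ0 : 0 ≤ χ)
    (hgΓ : ∀ ξ ∈ Icc x0 B, 0 ≤ g (u ξ) ∧ g (u ξ) ≤ Γ) (hχg : ∀ ξ ∈ Icc T B, χ ≤ g (u ξ)) :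
    u x0 + θ * (mu * (∫ x in Icc T B, |∫ t in T..x, negpart a t|) * χ * exp (-(|c| * (B - T)))
      - lam * (∫ x in Icc S T, |a x|) * Γ * exp (|c| * (B - S)) * (B - S)) ≤ u B := by
  have hx0B : x0 ≤ B := hx0T.trans hTB
  have hΓ0 : 0 ≤ Γ := (hgΓ x0 (left_mem_Icc.mpr hx0B)).1.trans (hgΓ x0 (left_mem_Icc.mpr hx0B)).2
  have hcoef : 0 ≤ θ * lam * Γ := mul_nonneg (mul_nonneg hθ hlam) hΓ0
  have key := h.add_le_of_le_sub (p := fun ξ => θ * lam * Γ * pospart a ξ)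
    (q := fun ξ => θ * mu * χ * negpart a ξ) hx0T hTB
    (((integrableOn_pospart ha).mono_set (Icc_subset_Icc_left hSx0)).const_mul _)
    (((integrableOn_negpart ha).mono_set (Icc_subset_Icc_left (hSx0.trans hx0T))).const_mul _)
    (fun ξ _ => mul_nonneg hcoef (pospart_nonneg a ξ))
    (fun ξ _ => mul_nonneg (mul_nonneg (mul_nonneg hθ hmu) hχ0) (negpart_nonneg a ξ))
    (fun ξ hξ => by
      simpa using mul_awt_mul_le (a := a) (x := ξ) hθ hlam hmu (hgΓ ξ hξ).1 (hgΓ ξ hξ).2)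
    (fun ξ hξ => mul_awt_mul_le hθ hlam hmu (hχg ξ hξ) (hgΓ ξ ⟨hx0T.trans hξ.1, hξ.2⟩).2)
  have hp : (B - x0) * exp (|c| * (B - x0)) * ∫ ξ in x0..B, θ * lam * Γ * pospart a ξ
      ≤ θ * (lam * (∫ x in Icc S T, |a x|) * Γ * exp (|c| * (B - S)) * (B - S)) := by
    rw [intervalIntegral.integral_const_mul]
    calc (B - x0) * exp (|c| * (B - x0)) * (θ * lam * Γ * ∫ ξ in x0..B, pospart a ξ)
        ≤ (B - S) * exp (|c| * (B - S)) * (θ * lam * Γ * ∫ x in Icc S T, |a x|) :=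
          mul_le_mul (mul_le_mul (by linarith)
              (exp_le_exp.mpr (mul_le_mul_of_nonneg_left (by linarith) (abs_nonneg c)))
              (exp_pos _).le (by linarith))
            (mul_le_mul_of_nonneg_left
              (integral_pospart_le_integral_abs hSx0 hx0T hTB ha hneg) hcoef)
            (mul_nonneg hcoef (intervalIntegral.integral_nonneg hx0B
              fun ξ _ => pospart_nonneg a ξ))
            (mul_nonneg (by linarith) (exp_pos _).le)
      _ = θ * (lam * (∫ x in Icc S T, |a x|) * Γ * exp (|c| * (B - S)) * (B - S)) := by ring
  have hq : ∫ x in T..B, ∫ ξ in T..x, θ * mu * χ * negpart a ξ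
      = θ * mu * χ * ∫ x in Icc T B, |∫ t in T..x, negpart a t| := by
    simp_rw [intervalIntegral.integral_const_mul]
    rw [intervalIntegral.integral_of_le hTB, ← integral_Icc_eq_integral_Ioc]
    exact congrArg _ (setIntegral_congr_fun measurableSet_Icc fun x hx =>
      (abs_of_nonneg (intervalIntegral.integral_nonneg hx.1 fun _ _ => negpart_nonneg a _)).symm)
  rw [hq] at key
  linarith

theorem lower_bound_at_right_end
    (h : DampedSol c (fun ξ => θ * awt a lam mu ξ * g (u ξ)) u u' x0 (Icc x0 B))
    (hSx0 : S ≤ x0) (hx0T : x0 ≤ T) (hTB : T ≤ B) (ha : IntegrableOn a (Icc S B))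
    (hpos : ∀ᵐ x ∂volume.restrict (Icc S T), 0 ≤ a x)
    (hneg : ∀ᵐ x ∂volume.restrict (Icc T B), a x ≤ 0)
    (hθ : θ ∈ Ioc (0:ℝ) 1) (hlam : 0 ≤ lam) (hmu : 0 ≤ mu) (hd : 0 ≤ d)
    (hg : ContinuousOn g (Icc 0 1)) (hg0 : ∀ v ∈ Icc (0:ℝ) 1, 0 ≤ g v)
    (hgL : ∀ v ∈ Icc (0:ℝ) 1, g v ≤ L * (1 - v))
    (hu01 : ∀ x ∈ Icc x0 B, u x ∈ Icc (0:ℝ) 1) (hmax : ∀ x ∈ Icc x0 B, u x ≤ u x0)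
    (hℓ : B - S ≤ ℓ) (hN : ∫ x in Icc S T, |a x| ≤ N)
    (hclose : (1 - u x0) * exp (exp (|c| * ℓ) * lam * L * N * ℓ) ≤ 1 - d) :
    u x0 + θ * (mu * (∫ x in Icc T B, |∫ t in T..x, negpart a t|) * sInf (g '' Icc d (u x0))
        * exp (-(|c| * (B - T))) - lam * (∫ x in Icc S T, |a x|) * sSup (g '' Icc 0 (u x0))
        * exp (|c| * (B - S)) * (B - S)) ≤ u B := by
  have hx0B : x0 ≤ B := hx0T.trans hTB
  have hdu := le_of_one_sub_mul_exp_le h hSx0 hx0T hTB ha hpos hneg hθ hlam hmu hg0 hgL hu01 hℓ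
    hN hclose
  have hR1 : u x0 ≤ 1 := (hu01 x0 (left_mem_Icc.mpr hx0B)).2
  have hdR : d ≤ u x0 := (hdu B (right_mem_Icc.mpr hx0B)).trans (hmax B (right_mem_Icc.mpr hx0B))
  refine lower_bound_at_right_end_of_bounds h hSx0 hx0T hTB ha hneg hθ.1.le hlam hmu
    (le_csInf ((nonempty_Icc.mpr hdR).image g)
      fun _ ⟨v, hv, hgv⟩ => hgv ▸ hg0 v ⟨hd.trans hv.1, hv.2.trans hR1⟩)
    (fun ξ hξ => ⟨hg0 _ (hu01 ξ hξ), le_sSup_image_Icc (hg.mono (Icc_subset_Icc_right hR1))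
      ⟨(hu01 ξ hξ).1, hmax ξ hξ⟩⟩)
    (fun ξ hξ => sInf_image_Icc_le (hg.mono (Icc_subset_Icc hd hR1))
      ⟨hdu ξ ⟨hx0T.trans hξ.1, hξ.2⟩, hmax ξ ⟨hx0T.trans hξ.1, hξ.2⟩⟩)

theorem lower_bound_at_left_end {A : ℝ}
    (h : DampedSol c (fun ξ => θ * awt a lam mu ξ * g (u ξ)) u u' x0 (Icc A x0))
    (hAS : A ≤ S) (hSx0 : S ≤ x0) (hx0T : x0 ≤ T) (ha : IntegrableOn a (Icc A T))
    (hneg : ∀ᵐ x ∂volume.restrict (Icc A S), a x ≤ 0)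
    (hpos : ∀ᵐ x ∂volume.restrict (Icc S T), 0 ≤ a x)
    (hθ : θ ∈ Ioc (0:ℝ) 1) (hlam : 0 ≤ lam) (hmu : 0 ≤ mu) (hd : 0 ≤ d)
    (hg : ContinuousOn g (Icc 0 1)) (hg0 : ∀ v ∈ Icc (0:ℝ) 1, 0 ≤ g v)
    (hgL : ∀ v ∈ Icc (0:ℝ) 1, g v ≤ L * (1 - v))
    (hu01 : ∀ x ∈ Icc A x0, u x ∈ Icc (0:ℝ) 1) (hmax : ∀ x ∈ Icc A x0, u x ≤ u x0)
    (hℓ : T - A ≤ ℓ) (hN : ∫ x in Icc S T, |a x| ≤ N)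
    (hclose : (1 - u x0) * exp (exp (|c| * ℓ) * lam * L * N * ℓ) ≤ 1 - d) :
    u x0 + θ * (mu * (∫ x in Icc A S, |∫ t in x..S, negpart a t|) * sInf (g '' Icc d (u x0))
        * exp (-(|c| * (S - A))) - lam * (∫ x in Icc S T, |a x|) * sSup (g '' Icc 0 (u x0))
        * exp (|c| * (T - A)) * (T - A)) ≤ u A := by
  have hmem : ∀ {x}, x ∈ Icc (-x0) (-A) → -x ∈ Icc A x0 := fun hx =>
    ⟨le_neg.mpr hx.2, neg_le.mpr hx.1⟩
  have hY := setIntegral_Icc_comp_neg (fun x => |a x|) S T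
  have hX : ∫ x in Icc (-S) (-A), |∫ t in -S..x, negpart (fun x => a (-x)) t|
      = ∫ x in Icc A S, |∫ t in x..S, negpart a t| := by
    simp_rw [show ∀ t, negpart (fun x => a (-x)) t = negpart a (-t) from fun t => rfl,
      intervalIntegral.integral_comp_neg (negpart a), neg_neg]
    exact setIntegral_Icc_comp_neg (fun x => |∫ t in x..S, negpart a t|) A S
  have hsym := lower_bound_at_right_end (a := fun x => a (-x)) (u := fun x => u (-x)) (S := -T)
    (x0 := -x0) (T := -S) (B := -A) (ℓ := ℓ) (N := N) h.comp_neg (neg_le_neg hx0T) (neg_le_neg hSx0)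
    (neg_le_neg hAS) (integrableOn_Icc_comp_neg ha) (ae_restrict_Icc_comp_neg hpos)
    (ae_restrict_Icc_comp_neg hneg) hθ hlam hmu hd hg hg0 hgL (fun x hx => hu01 _ (hmem hx))
    (fun x hx => by simpa using hmax _ (hmem hx)) (by linarith) (hY ▸ hN)
    (by simpa [abs_neg] using hclose)
  simp only [neg_neg, abs_neg, sub_neg_eq_add] at hsym
  rwa [hX, hY, neg_add_eq_sub, neg_add_eq_sub] at hsym

end OneSided

theorem exists_deriv_eq_zero_of_sSup_eq {u u' : ℝ → ℝ} {A S T B R : ℝ} (hAS : A < S) (hST : S ≤ T)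
    (hTB : T < B) (hu : ∀ x ∈ Icc A B, HasDerivWithinAt u (u' x) (Icc A B) x)
    (hJ : sSup (u '' Icc A B) = R) (hI : sSup (u '' Icc S T) = R) :
    ∃ x0 ∈ Icc S T, u x0 = R ∧ (∀ x ∈ Icc A B, u x ≤ R) ∧ u' x0 = 0 := by
  have hcont : ContinuousOn u (Icc A B) := fun x hx => (hu x hx).continuousWithinAt
  have hsub : Icc S T ⊆ Icc A B := Icc_subset_Icc hAS.le hTB.le
  obtain ⟨x0, hx0, hx0R⟩ := hI ▸ (isCompact_Icc.image_of_continuousOn (hcont.mono hsub)).sSup_mem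
    ((nonempty_Icc.mpr hST).image u)
  have hle : ∀ x ∈ Icc A B, u x ≤ R := fun x hx => hJ ▸ le_sSup_image_Icc hcont hx
  have hnhds : Icc A B ∈ 𝓝 x0 := Icc_mem_nhds (hAS.trans_le hx0.1) (hx0.2.trans_lt hTB)
  refine ⟨x0, hx0, hx0R, hle, IsLocalMax.hasDerivAt_eq_zero ?_
    ((hu x0 (hsub hx0)).hasDerivAt hnhds)⟩
  filter_upwards [hnhds] with x hx
  exact hx0R ▸ hle x hx

namespace AStar

variable {P : ℝ} {m : ℕ} {a : ℝ → ℝ} {σ τ : ℕ → ℝ}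

theorem σ_mono (ha : AStar P m a σ τ) {j k : ℕ} (hj : 1 ≤ j) (hjk : j ≤ k) (hk : k ≤ m + 1) :
    σ j ≤ σ k := by
  induction k, hjk using Nat.le_induction with
  | base => exact le_rfl
  | succ k hjk ih =>
    have hkm : k ∈ Finset.Icc 1 m := Finset.mem_Icc.mpr ⟨hj.trans hjk, by omega⟩
    linarith [ih (by omega), ha.lt_στ k hkm, ha.lt_τσ k hkm]

theorem zero_le_σ (ha : AStar P m a σ τ) {i : ℕ} (hi : 1 ≤ i) (him : i ≤ m + 1) : 0 ≤ σ i :=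
  ha.σ_one ▸ ha.σ_mono le_rfl hi him

theorem σ_le_period (ha : AStar P m a σ τ) {i : ℕ} (hi : 1 ≤ i) (him : i ≤ m + 1) : σ i ≤ P :=
  ha.σ_last ▸ ha.σ_mono hi him le_rfl

/-- For `i = 1` this is `I⁻ₘ` shifted by `-P`, via `τ 0 = τ m - P` and periodicity. -/
theorem prev_negative_interval (ha : AStar P m a σ τ) (hτ0 : τ 0 = τ m - P) {i : ℕ}
    (hi : i ∈ Finset.Icc 1 m) :
    -P ≤ τ (i - 1) ∧ τ (i - 1) < σ i ∧
      ∀ᵐ x ∂volume.restrict (Icc (τ (i - 1)) (σ i)), a x ≤ 0 := by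
  obtain ⟨hi1, him⟩ := Finset.mem_Icc.mp hi
  have hmm : m ∈ Finset.Icc 1 m := Finset.mem_Icc.mpr ⟨ha.hm, le_rfl⟩
  rcases hi1.eq_or_lt with rfl | hi2
  · have hτm := ha.lt_τσ m hmm
    rw [ha.σ_last] at hτm
    refine ⟨?_, ?_, ?_⟩
    · linarith [ha.lt_στ m hmm, ha.zero_le_σ ha.hm (by omega : m ≤ m + 1)]
    · simp only [Nat.sub_self, hτ0, ha.σ_one]; linarith
    · have := ((measurePreserving_add_right volume P).restrict_preimage
        measurableSet_Icc).quasiMeasurePreserving.ae (ha.neg_ae m hmm)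
      simpa [ha.σ_last, hτ0, ha.σ_one, ha.periodic] using this
  · have hj : i - 1 ∈ Finset.Icc 1 m := Finset.mem_Icc.mpr ⟨by omega, by omega⟩
    have hsucc : i - 1 + 1 = i := by omega
    refine ⟨?_, hsucc ▸ ha.lt_τσ (i - 1) hj, hsucc ▸ ha.neg_ae (i - 1) hj⟩
    linarith [ha.lt_στ (i - 1) hj, ha.zero_le_σ (by omega : 1 ≤ i - 1) (by omega), ha.hP]

theorem integral_abs_le (ha : AStar P m a σ τ) {i : ℕ} (hi : i ∈ Finset.Icc 1 m) :
    ∫ x in Icc (σ i) (τ i), |a x| ≤ ∫ x in Icc 0 P, |a x| :=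
  setIntegral_mono_set (ha.locint.integrableOn_isCompact isCompact_Icc).abs
    (ae_of_all _ fun x => abs_nonneg _)
    (Icc_subset_Icc (ha.zero_le_σ (Finset.mem_Icc.mp hi).1 (by grind))
      ((ha.lt_τσ i hi).le.trans (ha.σ_le_period (by omega) (by grind)))).eventuallyLE

end AStar

theorem exists_mem_Ioo_forall_le_mul_le {C d : ℝ} (hC : 0 < C) (hd : d < 1) :
    ∃ Rbar ∈ Ioo d 1, ∀ R, Rbar ≤ R → (1 - R) * C ≤ 1 - d := by
  have hd1 : 0 < 1 - d := sub_pos.mpr hd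
  refine ⟨1 - (1 - d) / (C + 1), ⟨by linarith [div_lt_self hd1 (by linarith : (1:ℝ) < C + 1)],
    by linarith [div_pos hd1 (by linarith : (0:ℝ) < C + 1)]⟩, fun R hR => ?_⟩
  calc (1 - R) * C ≤ (1 - d) / (C + 1) * C := mul_le_mul_of_nonneg_right (by linarith) hC.le
    _ ≤ 1 - d := by
        rw [div_mul_eq_mul_div, div_le_iff₀ (by linarith)]
        nlinarith

/-- Lemma 2.8 (lem-R): estimates for large solutions on `I⁻_{i-1} ∪ I⁺_i ∪ I⁻_i`.
Here `Γ(R) = max_{0 ≤ v ≤ R} g(v)`, `χ(d,R) = min_{d ≤ v ≤ R} g(v)`,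
`A^r_i(x) = ∫_{τ_i}^x a⁻`, `A^l_{i-1}(x) = ∫_x^{σ_i} a⁻`, intervals cyclic
(`τ 0 = τ m - P`). -/
theorem statement13 (c P : ℝ) (m : ℕ) (a : ℝ → ℝ) (σ τ : ℕ → ℝ)
    (ha : AStar P m a σ τ) (hτ0 : τ 0 = τ m - P)
    (g : ℝ → ℝ) (hg : ContinuousOn g (Icc 0 1)) (hgs : Gstar g) (hg1 : Gone g)
    (lam d : ℝ) (hlam : 0 < lam) (hd : d ∈ Ioo (0:ℝ) 1) :
    ∃ Rbar ∈ Ioo d 1, ∀ R ∈ Ico Rbar 1, ∀ θ ∈ Ioc (0:ℝ) 1, ∀ mu : ℝ, 0 < mu →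
      ∀ i ∈ Finset.Icc 1 m, ∀ u u' : ℝ → ℝ,
        CaraSol c (fun x v => θ * awt a lam mu x * g v) u u'
          (Icc (τ (i - 1)) (σ (i + 1))) →
        (∀ x ∈ Icc (τ (i - 1)) (σ (i + 1)), u x ∈ Icc (0:ℝ) 1) →
        sSup (u '' Icc (τ (i - 1)) (σ (i + 1))) = R →
        sSup (u '' Icc (σ i) (τ i)) = R →
        (u (σ (i + 1)) ≥ R + θ *
          (mu * (∫ x in Icc (τ i) (σ (i + 1)), |∫ t in (τ i)..x, negpart a t|) *
              sInf (g '' Icc d R) * Real.exp (-(|c| * (σ (i + 1) - τ i))) -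
            lam * (∫ x in Icc (σ i) (τ i), |a x|) * sSup (g '' Icc (0:ℝ) R) *
              Real.exp (|c| * (σ (i + 1) - σ i)) * (σ (i + 1) - σ i))) ∧
        (u (τ (i - 1)) ≥ R + θ *
          (mu * (∫ x in Icc (τ (i - 1)) (σ i), |∫ t in x..(σ i), negpart a t|) *
              sInf (g '' Icc d R) * Real.exp (-(|c| * (σ i - τ (i - 1)))) -
            lam * (∫ x in Icc (σ i) (τ i), |a x|) * sSup (g '' Icc (0:ℝ) R) *
              Real.exp (|c| * (τ i - τ (i - 1))) * (τ i - τ (i - 1)))) := by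
  obtain ⟨L, hgL⟩ := hg1.exists_le_mul_one_sub hg hgs.2.1
  -- Every window `[τ (i-1), σ (i+1)]` has length at most `2P`, and `∫_{I⁺ᵢ} |a| ≤ ∫_0^P |a|`.
  obtain ⟨Rbar, hRbar, hclose⟩ := exists_mem_Ioo_forall_le_mul_le
    (exp_pos (exp (|c| * (2 * P)) * lam * L * (∫ x in Icc 0 P, |a x|) * (2 * P))) hd.2
  refine ⟨Rbar, hRbar, fun R hR θ hθ mu hmu i hi u u' hsol hu01 hsupJ hsupI => ?_⟩
  obtain ⟨hi1, him⟩ := Finset.mem_Icc.mp hi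
  obtain ⟨hPA, hAS, hnegL⟩ := ha.prev_negative_interval hτ0 hi
  have hST := ha.lt_στ i hi
  have hTB := ha.lt_τσ i hi
  have hS0 := ha.zero_le_σ hi1 (by omega)
  have hBP := ha.σ_le_period (by omega : 1 ≤ i + 1) (by omega)
  have hint : IntegrableOn a (Icc (τ (i - 1)) (σ (i + 1))) :=
    ha.locint.integrableOn_isCompact isCompact_Icc
  obtain ⟨x0, hx0, rfl, hmax, hcrit⟩ :=
    exists_deriv_eq_zero_of_sSup_eq hAS hST.le hTB hsol.1 hsupJ hsupI
  have hD := hsol.dampedSol (integrableOn_mul_awt_mul hint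
    (hg.comp (fun x hx => (hsol.1 x hx).continuousWithinAt) hu01))
    ⟨hAS.le.trans hx0.1, hx0.2.trans hTB.le⟩ hcrit
  have hsubR : Icc x0 (σ (i + 1)) ⊆ Icc (τ (i - 1)) (σ (i + 1)) :=
    Icc_subset_Icc_left (hAS.le.trans hx0.1)
  have hsubL : Icc (τ (i - 1)) x0 ⊆ Icc (τ (i - 1)) (σ (i + 1)) :=
    Icc_subset_Icc_right (hx0.2.trans hTB.le)
  exact ⟨lower_bound_at_right_end (hD.mono hsubR) hx0.1 hx0.2 hTB.le
      (hint.mono_set (Icc_subset_Icc_left hAS.le)) (ha.pos_ae i hi) (ha.neg_ae i hi) hθ hlam.le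
      hmu.le hd.1.le hg hgs.nonneg hgL (fun x hx => hu01 x (hsubR hx))
      (fun x hx => hmax x (hsubR hx)) (by linarith [ha.hP]) (ha.integral_abs_le hi)
      (hclose _ hR.1),
    lower_bound_at_left_end (hD.mono hsubL) hAS.le hx0.1 hx0.2
      (hint.mono_set (Icc_subset_Icc_right hTB.le)) hnegL (ha.pos_ae i hi) hθ hlam.le hmu.le
      hd.1.le hg hgs.nonneg hgL (fun x hx => hu01 x (hsubL hx)) (fun x hx => hmax x (hsubL hx))
      (by linarith) (ha.integral_abs_le hi) (hclose _ hR.1)⟩
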